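/- arXiv:2211.12655 — 2 statements merged into one kernel-verified Lean document; each statement's English description precedes it below -/
import Mathlib

section
/- The function t ↦ u^t / (1 - t(1-u)) is strictly convex on the interval where 1 - t(1-u) > 0, for any fixed real u > 0 with u ≠ 1. -/
/-!
On its domain the function equals `exp (log u * t - log (1 - t * (1 - u)))`. The denominator
`1 - t * (1 - u)` is the affine interpolation `lineMap 1 u t`, which is injective because `u ≠ 1`,
so the exponent is strictly convex as `-log` is; and `exp` is increasing and convex, so it
preserves strict convexity.
-/

open Real Set Function

theorem StrictConvexOn.comp_affineMap {𝕜 E F β : Type*} [Field 𝕜] [LinearOrder 𝕜]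
    [AddCommGroup E] [AddCommGroup F] [Module 𝕜 E] [Module 𝕜 F]
    [AddCommMonoid β] [PartialOrder β] [SMul 𝕜 β]
    {f : F → β} (g : E →ᵃ[𝕜] F) (hg : Injective g) {s : Set F} (hf : StrictConvexOn 𝕜 s f) :
    StrictConvexOn 𝕜 (g ⁻¹' s) (f ∘ g) :=
  ⟨hf.1.affine_preimage _, fun x hx y hy hxy a b ha hb hab =>
    calc
      (f ∘ g) (a • x + b • y) = f (a • g x + b • g y) := by
        rw [comp_apply, Convex.combo_affine_apply hab]
      _ < a • f (g x) + b • f (g y) := hf.2 hx hy (hg.ne hxy) ha hb hab⟩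

theorem StrictConvexOn.exp {E : Type*} [AddCommMonoid E] [Module ℝ E] {s : Set E} {f : E → ℝ}
    (hf : StrictConvexOn ℝ s f) : StrictConvexOn ℝ s (fun x => Real.exp (f x)) :=
  ⟨hf.1, fun _ hx _ hy hxy _ _ ha hb hab =>
    (exp_lt_exp.2 (hf.2 hx hy hxy ha hb hab)).trans_le
      (convexOn_exp.2 (mem_univ _) (mem_univ _) ha.le hb.le hab)⟩

theorem strictConvexOn_neg_log_lineMap {a b : ℝ} (hab : a ≠ b) :
    StrictConvexOn ℝ {t | 0 < AffineMap.lineMap (k := ℝ) a b t}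
      (fun t => -log (AffineMap.lineMap (k := ℝ) a b t)) :=
  strictConcaveOn_log_Ioi.neg.comp_affineMap _ (AffineMap.lineMap_injective ℝ hab)

theorem theta_strictConvex (u : ℝ) (hu : 0 < u) (hu1 : u ≠ 1) :
    StrictConvexOn ℝ {t : ℝ | 0 < 1 - t * (1 - u)}
      (fun t : ℝ => u ^ t / (1 - t * (1 - u))) := by
  have hden : ∀ t : ℝ, AffineMap.lineMap 1 u t = 1 - t * (1 - u) := fun t => by
    rw [AffineMap.lineMap_apply_ring']; ring
  have hexponent : StrictConvexOn ℝ {t : ℝ | 0 < 1 - t * (1 - u)}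
      (fun t => log u * t - log (1 - t * (1 - u))) := by
    have hneglog := strictConvexOn_neg_log_lineMap hu1.symm
    have h := hneglog.add_convexOn ((LinearMap.mul ℝ ℝ (log u)).convexOn hneglog.1)
    simp only [hden] at h
    refine h.congr fun t _ => ?_
    simp only [Pi.add_apply, LinearMap.mul_apply']
    ring
  refine hexponent.exp.congr fun t ht => ?_
  dsimp only
  rw [exp_sub, exp_log ht, rpow_def_of_pos hu]
end

section
/- For fixed real u > 0 with u ≠ 1, define ϑ(u,t) = u^t/(1 - t(1-u)). Then the derivative with respect to t of ϑ(u,t) + ϑ(u^{-1},t) vanishes at t = 1/2. -/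
/-!
Writing `s = √u`, the derivative of `ϑ(u, ·)` at `1/2` is
`s · (log u · (1 + u)/2 + (1 - u)) / ((1 + u)/2)²`. Replacing `u` by `u⁻¹` replaces `s` by `s⁻¹`,
`log u` by `-log u` and `(1 + u)/2` by `(1 + u)/(2u)`, and the result is exactly the negative,
so the two derivatives cancel.
-/

open Real

noncomputable def theta (u t : ℝ) : ℝ := u ^ t / (1 - t * (1 - u))

lemma hasDerivAt_theta {u t : ℝ} (hu : 0 < u) (ht : 1 - t * (1 - u) ≠ 0) :
    HasDerivAt (theta u)
      (u ^ t * (log u * (1 - t * (1 - u)) + (1 - u)) / (1 - t * (1 - u)) ^ 2) t := by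
  have hnum : HasDerivAt (fun t : ℝ => u ^ t) (u ^ t * log u) t :=
    (hasStrictDerivAt_const_rpow hu t).hasDerivAt
  have hden : HasDerivAt (fun t : ℝ => 1 - t * (1 - u)) (-(1 - u)) t := by
    simpa using ((hasDerivAt_id t).mul_const (1 - u)).const_sub 1
  exact (hnum.div hden ht).congr_deriv (by ring)

lemma deriv_theta_half {u : ℝ} (hu : 0 < u) :
    deriv (theta u) (1 / 2) = √u * (log u * ((1 + u) / 2) + (1 - u)) / ((1 + u) / 2) ^ 2 := by
  have hden : 1 - 1 / 2 * (1 - u) = (1 + u) / 2 := by ring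
  rw [(hasDerivAt_theta hu (by rw [hden]; positivity)).deriv, hden, ← sqrt_eq_rpow]

lemma deriv_theta_inv_half {u : ℝ} (hu : 0 < u) :
    deriv (theta u⁻¹) (1 / 2) = -deriv (theta u) (1 / 2) := by
  rw [deriv_theta_half hu, deriv_theta_half (inv_pos.mpr hu), log_inv, sqrt_inv]
  have hs : 0 < √u := sqrt_pos.mpr hu
  have hsq : u = √u ^ 2 := (sq_sqrt hu.le).symm
  generalize log u = L
  generalize √u = s at hs hsq
  subst hsq
  field_simp
  ring

theorem deriv_theta_sum_half_general (u : ℝ) (hu : 0 < u) :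
    deriv (fun t : ℝ => u ^ t / (1 - t * (1 - u))
        + u⁻¹ ^ t / (1 - t * (1 - u⁻¹))) (1 / 2) = 0 := by
  have hdiff (v : ℝ) (hv : 0 < v) : DifferentiableAt ℝ (theta v) (1 / 2) :=
    (hasDerivAt_theta hv (by nlinarith)).differentiableAt
  change deriv (theta u + theta u⁻¹) (1 / 2) = 0
  rw [deriv_add (hdiff u hu) (hdiff u⁻¹ (inv_pos.mpr hu)), deriv_theta_inv_half hu, add_neg_cancel]

theorem deriv_theta_sum_half (u : ℝ) (hu : 0 < u) (hu1 : u ≠ 1) :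
    deriv (fun t : ℝ => u ^ t / (1 - t * (1 - u))
        + u⁻¹ ^ t / (1 - t * (1 - u⁻¹))) (1 / 2) = 0 :=
  deriv_theta_sum_half_general u hu
end
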